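/- For every natural number m ≥ 1 and 0 < q < 1, one has 1 - (m+1)/[m+1]_q ≥ 1 - 2/[2]_q, with [n]_q = (q^{-n} - q^n)/(q^{-1} - q); equivalently (m+1)/[m+1]_q ≤ 2/[2]_q. -/

import Mathlib

noncomputable def qnum (q : ℝ) (n : ℕ) : ℝ := (q⁻¹ ^ n - q ^ n) / (q⁻¹ - q)

lemma keyK (x : ℝ) (hx : 1 ≤ x) : ∀ n : ℕ, 2 ≤ n → (n:ℝ)*(x^(n+4) - x^n) ≤ 2*(x^(2*n+2) - x^2) := by
  intro n hn
  induction n, hn using Nat.le_induction with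
  | base =>
    push_cast
    norm_num
  | succ n hn ih =>
    have hx0 : (0:ℝ) ≤ x := le_trans zero_le_one hx
    have hmono : ∀ a b : ℕ, a ≤ b → x^a ≤ x^b := fun a b h => pow_le_pow_right₀ hx h
    have h3 : (0:ℝ) ≤ x - 1 := sub_nonneg.2 hx
    have E1 : x ^ (n+4) = x^n * x^4 := pow_add x n 4
    have E2 : x ^ (2*n+2) = (x^n)^2 * x^2 := by rw [pow_add, pow_mul]; ring
    have E3 : x ^ (n+1+4) = x^n * x^5 := pow_add x n 5
    have E4 : x ^ (n+1) = x^n * x := pow_succ x n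
    have E5 : x ^ (2*(n+1)+2) = (x^n)^2 * x^4 := by
      rw [show 2*(n+1)+2 = 2*n+4 from by omega, pow_add, pow_mul]; ring
    have h1 : (0:ℝ) ≤ (x^n*x^2 - x^1)*(x^n*x - x^1) := by
      rw [← pow_add, ← pow_succ]
      exact mul_nonneg (sub_nonneg.2 (hmono 1 (n+2) (by omega)))
        (sub_nonneg.2 (hmono 1 (n+1) (by omega)))
    have h2 : (0:ℝ) ≤ (x^n*x^3 - x^1)*(x^n - x^1) := by
      rw [← pow_add]
      exact mul_nonneg (sub_nonneg.2 (hmono 1 (n+3) (by omega)))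
        (sub_nonneg.2 (hmono 1 n (by omega)))
    rw [E1, E2] at ih
    push_cast
    rw [E3, E4, E5]
    nlinarith [mul_nonneg h3 h1, mul_nonneg h3 h2, mul_le_mul_of_nonneg_left ih hx0]

theorem stmt_12 (m : ℕ) (hm : 1 ≤ m) (q : ℝ) (hq : 0 < q) (hq1 : q < 1) :
    1 - ((m : ℝ) + 1) / qnum q (m + 1) ≥ 1 - 2 / qnum q 2 := by
  have hq0 : q ≠ 0 := ne_of_gt hq
  set x := q⁻¹ with hxdef
  have hx1 : 1 < x := one_lt_inv_iff₀.2 ⟨hq, hq1⟩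
  have hxq : x * q = 1 := inv_mul_cancel₀ hq0
  have hpow : ∀ k : ℕ, x^k * q^k = 1 := fun k => by rw [← mul_pow, hxq, one_pow]
  have hd : 0 < x - q := by linarith
  have hqx : q < x := by linarith
  have hnum : ∀ n : ℕ, n ≠ 0 → 0 < x^n - q^n := fun n hn =>
    sub_pos.2 (pow_lt_pow_left₀ hqx hq.le hn)
  have hqnum : ∀ n : ℕ, n ≠ 0 → 0 < qnum q n := fun n hn => div_pos (hnum n hn) hd
  have hk : ((m:ℝ)+1)*(x^(m+5) - x^(m+1)) ≤ 2*(x^(2*m+4) - x^2) := by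
    have h := keyK x hx1.le (m+1) (by omega)
    push_cast at h
    exact h
  have h1 : (x^(m+5) - x^(m+1)) * q^(m+3) = x^2 - q^2 := by
    have a := hpow (m+3); have b := hpow (m+1)
    linear_combination x^2 * a - q^2 * b
  have h2 : (x^(2*m+4) - x^2) * q^(m+3) = x^(m+1) - q^(m+1) := by
    have a := hpow (m+3); have b := hpow 2
    linear_combination x^(m+1) * a - q^(m+1) * b
  have final : ((m:ℝ)+1)*(x^2-q^2) ≤ 2*(x^(m+1)-q^(m+1)) := by
    calc ((m:ℝ)+1)*(x^2-q^2) = (((m:ℝ)+1)*(x^(m+5)-x^(m+1)))*q^(m+3) := by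
          rw [mul_assoc, h1]
      _ ≤ (2*(x^(2*m+4)-x^2))*q^(m+3) :=
          mul_le_mul_of_nonneg_right hk (pow_nonneg hq.le _)
      _ = 2*(x^(m+1)-q^(m+1)) := by rw [mul_assoc, h2]
  have key : ((m:ℝ)+1) / qnum q (m+1) ≤ 2 / qnum q 2 := by
    rw [div_le_div_iff₀ (hqnum (m+1) (by omega)) (hqnum 2 (by omega))]
    show ((m:ℝ)+1) * ((x^2 - q^2)/(x-q)) ≤ 2 * ((x^(m+1) - q^(m+1))/(x-q))
    rw [mul_div_assoc', mul_div_assoc', div_le_div_iff₀ hd hd]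
    nlinarith [mul_le_mul_of_nonneg_right final hd.le]
  linarith
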